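/- Let P be a preference profile and let w ∈ RV^PUT(P) be a River PUT winner. Let T^RSP = T^RSP(w, sRV(P)) be an output of the directed Prim algorithm started at w on the semi-River diagram sRV(P), and let o^RSP = σ(E(M(P)), E(T^RSP)) be any descending linear ordering in which, among edges of equal margin, edges of T^RSP come first. Then T^RSP = M^RV(o^RSP, P); in particular, w is the root of M^RV(o^RSP, P) and hence w ∈ RV(o^RSP, P). -/

import Mathlib

attribute [local instance] Classical.propDecidable

/-- A preference profile: each of `m` voters has a strict linear (total) preference
relation over the alternatives `A`. -/
structure Profile (A : Type*) (m : ℕ) where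
  pref : Fin m → A → A → Prop
  strict : ∀ i, IsStrictTotalOrder A (pref i)

/-- The majority margin of `x` over `y`: the number of voters preferring `x` to `y`
minus the number of voters preferring `y` to `x`. -/
noncomputable def margin {A : Type*} [Fintype A] {m : ℕ} (P : Profile A m) (x y : A) : ℤ :=
  ((Finset.univ.filter fun i => P.pref i x y).card : ℤ) -
    ((Finset.univ.filter fun i => P.pref i y x).card : ℤ)

/-- The majority margin as a function on (potential) edges. -/
noncomputable def marginE {A : Type*} [Fintype A] {m : ℕ} (P : Profile A m) : A × A → ℤ :=
  fun e => margin P e.1 e.2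

/-- The edge set of the margin graph: an edge `(x, y)` between distinct alternatives
whenever the majority margin of `x` over `y` is nonnegative. -/
noncomputable def marginEdges {A : Type*} [Fintype A] {m : ℕ} (P : Profile A m) :
    Finset (A × A) :=
  Finset.univ.filter fun e => e.1 ≠ e.2 ∧ 0 ≤ margin P e.1 e.2

/-- `l` is a path from `x` to `y` in the digraph with edge set `E`:
a nonempty list of pairwise distinct vertices starting at `x`, ending at `y`,
whose consecutive vertices are joined by edges of `E`. -/
def IsPathFrom {V : Type*} (E : Finset (V × V)) (l : List V) (x y : V) : Prop :=
  l ≠ [] ∧ l.Nodup ∧ l.head? = some x ∧ l.getLast? = some y ∧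
    l.Chain' fun a b => (a, b) ∈ E

/-- There is a path from `x` to `y` in the digraph with edge set `E`. -/
def Reach {V : Type*} (E : Finset (V × V)) (x y : V) : Prop :=
  ∃ l, IsPathFrom E l x y

/-- The digraph with edge set `E` contains a directed cycle. -/
def HasCycle {V : Type*} (E : Finset (V × V)) : Prop :=
  ∃ f ∈ E, Reach E f.2 f.1

/-- `T` is a tree rooted at `r`: there is a unique path from `r` to every vertex,
no edge enters the root, and every vertex has at most one incoming edge. -/
def IsRootedTree {V : Type*} (T : Finset (V × V)) (r : V) : Prop :=
  (∀ v : V, ∃! l : List V, IsPathFrom T l r v) ∧ (∀ e ∈ T, e.2 ≠ r) ∧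
    ∀ e f, e ∈ T → f ∈ T → e.2 = f.2 → e = f

/-- `a` has no incoming edge in `D`. -/
def noIncoming {V : Type*} (D : Finset (V × V)) (a : V) : Prop :=
  ∀ e ∈ D, e.2 ≠ a

/-- `o` is a descending linear ordering of the edge set `E` with respect to the
margin function `marg`: an enumeration of `E` without repetition in which edges of
larger margin come before edges of smaller margin. -/
def IsDescOrdering {V : Type*} (marg : V × V → ℤ) (E : Finset (V × V))
    (o : List (V × V)) : Prop :=
  o.Nodup ∧ (∀ e, e ∈ o ↔ e ∈ E) ∧ o.Pairwise fun e f => marg f ≤ marg e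

/-- One step of the River procedure: add `e = (x, y)` to the current diagram `D` unless
(R1) `y` already has an incoming edge in `D`, or (R2) there is a path from `y` to `x`
in `D`. -/
noncomputable def riverStep {V : Type*} (D : Finset (V × V)) (e : V × V) :
    Finset (V × V) :=
  if (∃ f ∈ D, f.2 = e.2) ∨ Reach D e.2 e.1 then D else insert e D

/-- The River diagram obtained by processing the edges in the order `o`,
starting from the empty diagram. -/
noncomputable def riverFold {V : Type*} (o : List (V × V)) : Finset (V × V) :=
  o.foldl riverStep ∅

/-- One step of the semi-River process with margin function `marg`: add `e = (x, y)` to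
the current diagram `D` unless
(sR1) there is another incoming edge `e' = (z, y)` of `y` among the included edges of
margin strictly greater than `marg e` such that there is no path from `y` to `z` among
the included edges of margin at least `marg e'`, or
(sR2) within the included edges of strictly greater margin, the set of vertices having
a path to `x` avoiding all incoming edges of `y` induces an acyclic subgraph in which
`y` is the only vertex with no incoming edge. -/
noncomputable def semiRiverStep {V : Type*} (marg : V × V → ℤ) (D : Finset (V × V))
    (e : V × V) : Finset (V × V) :=
  let Sgt := D.filter fun f => marg e < marg f
  let sR1 : Prop := ∃ f ∈ Sgt, f.2 = e.2 ∧
      ¬ Reach (D.filter fun g => marg f ≤ marg g) e.2 f.1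
  let Anc : Set V := {v | Reach (Sgt.filter fun g => g.2 ≠ e.2) v e.1}
  let ind := Sgt.filter fun g => g.1 ∈ Anc ∧ g.2 ∈ Anc
  let sR2 : Prop := e.2 ∈ Anc ∧ ¬ HasCycle ind ∧
      ∀ v ∈ Anc, ((∀ g ∈ ind, g.2 ≠ v) ↔ v = e.2)
  if sR1 ∨ sR2 then D else insert e D

/-- The semi-River diagram obtained by processing the edges in the order `o`,
starting from the empty diagram. -/
noncomputable def semiRiverFold {V : Type*} (marg : V × V → ℤ) (o : List (V × V)) :
    Finset (V × V) :=
  o.foldl (semiRiverStep marg) ∅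

/-- The runs of the directed Prim algorithm on the digraph with edge set `E`, weight
function `w`, and start vertex `s`: `PrimRun E w s S T` holds if after some number of
steps the set of explored vertices is `S` and the collected tree edges are `T`; at each
step an arbitrary crossing edge of maximum weight is selected. -/
inductive PrimRun {V : Type*} {β : Type*} [LinearOrder β] (E : Finset (V × V))
    (w : V × V → β) (s : V) : Finset V → Finset (V × V) → Prop
  | init : PrimRun E w s {s} ∅
  | step {S : Finset V} {T : Finset (V × V)} (e : V × V) (he : e ∈ E)
      (h1 : e.1 ∈ S) (h2 : e.2 ∉ S)
      (hmax : ∀ f ∈ E, f.1 ∈ S → f.2 ∉ S → w f ≤ w e)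
      (hrun : PrimRun E w s S T) :
      PrimRun E w s (insert e.2 S) (insert e T)

/-- `T` is a possible output of the directed Prim algorithm on `(E, w)` started at `s`:
it is obtained by a run that has terminated, i.e. no crossing edge remains. -/
def IsPrimOutput {V : Type*} {β : Type*} [LinearOrder β] (E : Finset (V × V))
    (w : V × V → β) (s : V) (T : Finset (V × V)) : Prop :=
  ∃ S : Finset V, PrimRun E w s S T ∧ ∀ f ∈ E, f.1 ∈ S → f.2 ∈ S

/-- The strength of a path (as a list of vertices): the minimum weight of its edges,
`⊤` for a trivial path with no edges. -/
noncomputable def strength {V : Type*} (w : V × V → ℕ) (l : List V) : ℕ∞ :=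
  ((l.zip l.tail).map fun p => (w p : ℕ∞)).foldr min ⊤

/-- `l` is a strongest path from `x` to `y`: it is a path from `x` to `y` and no path
from `x` to `y` has (strictly) greater strength. -/
def IsStrongestPath {V : Type*} (E : Finset (V × V)) (w : V × V → ℕ) (l : List V)
    (x y : V) : Prop :=
  IsPathFrom E l x y ∧ ∀ l', IsPathFrom E l' x y → strength w l' ≤ strength w l

/-- `o` is a descending linear ordering of `E` in which, among edges of equal margin,
edges belonging to `E'` come before edges not belonging to `E'`. -/
def IsSetOrdering {V : Type*} (marg : V × V → ℤ) (E E' : Finset (V × V))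
    (o : List (V × V)) : Prop :=
  o.Nodup ∧ (∀ e, e ∈ o ↔ e ∈ E) ∧
    o.Pairwise fun e f => marg f ≤ marg e ∧ (marg e = marg f → f ∈ E' → e ∈ E')


/-!
Say that a diagram `H` blocks an edge `e` if `H` has an edge into `e.2` at least as heavy as `e`,
or a path from `e.2` to `e.1` through edges at least as heavy as `e`: River rejects exactly the
edges blocked by what it has built so far. Hence River, run on an ordering that puts the edges of
`T` first among ties, returns `T` as soon as `T` is acyclic, has in-degree at most one and blocks
every other edge.

The Prim tree spans all vertices, because `w` reaches every vertex in its River diagram and every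
River diagram lies inside the semi-River diagram. Let `g` be a semi-River edge heavier than the
tree edge `f` entering `g.2`. Since `f` was not rejected by (sR1), a path through edges at least
as heavy as `g` leads from `g.2` back to `g.1`. Since Prim preferred `f` to every edge crossing
at that time, the tree edges entering the vertices explored between `g.2` and `g.1` are at least
as heavy as `g` and start at vertices explored no earlier than `g.2`, so following them back from
`g.1` gives a tree path to `g.2` that blocks `g`. An edge missing from the semi-River diagram was
rejected by (sR1) or (sR2); climbing back from `e.1` along heavy tree edges inside the ancestor
set of (sR2) either reaches `e.2` or ends at the head of an edge that the tree blocks, closing a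
cycle that (sR2) forbids. The same climb, with the River diagram in place of the tree, shows that
River diagrams lie inside the semi-River diagram.
-/

open Relation

section Reachability

variable {V : Type*} {E F : Finset (V × V)} {x y z : V}

theorem isPathFrom_iff {l : List V} :
    IsPathFrom E l x y ↔ l ≠ [] ∧ l.Nodup ∧ l.head? = some x ∧ l.getLast? = some y ∧
      l.IsChain fun a b => (a, b) ∈ E :=
  Iff.rfl

theorem Reach.refl (E : Finset (V × V)) (x : V) : Reach E x x :=
  ⟨[x], by simp [isPathFrom_iff]⟩

/-- Paths are simple, so a path already passing through `z` is cut there instead of extended. -/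
theorem Reach.snoc (h : Reach E x y) (hyz : (y, z) ∈ E) : Reach E x z := by
  obtain ⟨l, hne, hnd, hx, hy, hc⟩ := h
  by_cases hz : z ∈ l
  · have hlt : l.idxOf z < l.length := List.idxOf_lt_length_iff.2 hz
    have hlen : (l.take (l.idxOf z + 1)).length = l.idxOf z + 1 := by
      rw [List.length_take]; omega
    refine ⟨l.take (l.idxOf z + 1), ?_, hnd.sublist (List.take_sublist _ _), ?_, ?_,
      hc.take _⟩
    · rw [← List.length_pos_iff]; omega
    · rwa [List.head?_take, if_neg (by omega)]
    · rw [List.getLast?_eq_getElem?, hlen, Nat.add_sub_cancel, List.getElem?_take,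
        if_pos (by omega), List.getElem?_eq_getElem hlt, List.getElem_idxOf hlt]
  · refine ⟨l ++ [z], by simp, ?_, ?_, by simp, ?_⟩
    · simp only [List.nodup_append, hnd, List.nodup_singleton, List.mem_singleton, true_and]
      rintro a ha b rfl rfl
      exact hz ha
    · rwa [List.head?_append_of_ne_nil l hne]
    · refine hc.append (.singleton z) ?_
      intro a ha b hb
      simp_all

theorem reach_iff_reflTransGen : Reach E x y ↔ ReflTransGen (fun a b => (a, b) ∈ E) x y := by
  constructor
  · rintro ⟨l, hne, -, hx, hy, hc⟩
    rw [List.head?_eq_some_head hne, Option.some_inj] at hx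
    rw [List.getLast?_eq_some_getLast hne, Option.some_inj] at hy
    exact hx ▸ hy ▸ List.relationReflTransGen_of_exists_isChain l hc hne
  · intro h
    induction h with
    | refl => exact Reach.refl E x
    | tail _ hbc ih => exact ih.snoc hbc

theorem Reach.single (h : (x, y) ∈ E) : Reach E x y :=
  (Reach.refl E x).snoc h

theorem Reach.trans (h₁ : Reach E x y) (h₂ : Reach E y z) : Reach E x z :=
  reach_iff_reflTransGen.2 ((reach_iff_reflTransGen.1 h₁).trans (reach_iff_reflTransGen.1 h₂))

theorem Reach.mono (h : Reach E x y) (hEF : E ⊆ F) : Reach F x y :=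
  reach_iff_reflTransGen.2 <|
    ReflTransGen.mono (fun _ _ hab => hEF hab) _ _ (reach_iff_reflTransGen.1 h)

theorem Reach.exists_crossing (h : Reach E x y) (p : V → Prop) (hx : p x) (hy : ¬ p y) :
    ∃ f ∈ E, p f.1 ∧ ¬ p f.2 := by
  induction reach_iff_reflTransGen.1 h with
  | refl => exact absurd hx hy
  | @tail b c _ hbc ih =>
    by_cases hb : p b
    · exact ⟨(b, c), hbc, hb, hy⟩
    · exact ih (reach_iff_reflTransGen.2 ‹_›) hb

theorem Reach.exists_inEdge (h : Reach E x y) (hxy : x ≠ y) : ∃ f ∈ E, f.2 = y := by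
  obtain ⟨f, hf, -, hf2⟩ := h.exists_crossing (· ≠ y) hxy (by simp)
  exact ⟨f, hf, not_not.1 hf2⟩

theorem Reach.eq_or_lt_of_rank {r : V → ℕ} (hr : ∀ f ∈ E, r f.1 < r f.2) (h : Reach E x y) :
    x = y ∨ r x < r y := by
  induction reach_iff_reflTransGen.1 h with
  | refl => exact Or.inl rfl
  | @tail b c _ hbc ih =>
    rcases ih (reach_iff_reflTransGen.2 ‹_›) with rfl | hlt
    · exact Or.inr (hr _ hbc)
    · exact Or.inr (hlt.trans (hr _ hbc))

theorem Reach.mono_of_reach (h : Reach E x y)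
    (hEF : ∀ a b, (a, b) ∈ E → Reach E b y → (a, b) ∈ F) : Reach F x y := by
  rw [reach_iff_reflTransGen] at h ⊢
  induction h using ReflTransGen.head_induction_on with
  | refl => exact .refl
  | head hac hcy ih => exact .head (hEF _ _ hac (reach_iff_reflTransGen.2 hcy)) ih

theorem Reach.of_insert {e : V × V} (h : Reach (insert e E) x y) :
    Reach E x y ∨ (Reach E x e.1 ∧ Reach E e.2 y) := by
  induction reach_iff_reflTransGen.1 h with
  | refl => exact Or.inl (Reach.refl E x)
  | @tail b c _ hbc ih =>
    rcases Finset.mem_insert.1 hbc with rfl | hbc <;>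
      rcases ih (reach_iff_reflTransGen.2 ‹_›) with h₁ | ⟨h₁, h₂⟩
    · exact Or.inr ⟨h₁, Reach.refl E _⟩
    · exact Or.inr ⟨h₁, Reach.refl E _⟩
    · exact Or.inl (h₁.snoc hbc)
    · exact Or.inr ⟨h₁, h₂.snoc hbc⟩

theorem not_hasCycle_of_rank {r : V → ℕ} (hr : ∀ f ∈ E, r f.1 < r f.2) : ¬ HasCycle E := by
  rintro ⟨f, hf, hreach⟩
  have := hr f hf
  rcases hreach.eq_or_lt_of_rank hr with h | h
  · rw [h] at this; exact lt_irrefl _ this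
  · omega

theorem wellFounded_of_not_hasCycle [Finite V] (hE : ¬ HasCycle E) :
    WellFounded fun a b => (a, b) ∈ E := by
  have : Std.Irrefl (TransGen fun a b => (a, b) ∈ E) := ⟨fun a ha => hE <| by
    obtain ⟨u, hau, hua⟩ := TransGen.tail'_iff.1 ha
    exact ⟨(u, a), hua, reach_iff_reflTransGen.2 hau⟩⟩
  exact Subrelation.wf (fun h => TransGen.single h)
    (Finite.wellFounded_of_trans_of_irrefl (TransGen fun a b => (a, b) ∈ E))

theorem reach_of_forall_exists_inEdge [Finite V] (hE : ¬ HasCycle E)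
    (hin : ∀ y, y ≠ x → ∃ f ∈ E, f.2 = y) (y : V) : Reach E x y := by
  induction y using (wellFounded_of_not_hasCycle hE).induction with
  | _ y ih =>
    by_cases hy : y = x
    · exact hy ▸ Reach.refl E x
    · obtain ⟨f, hf, rfl⟩ := hin y hy
      exact (ih f.1 hf).snoc hf

end Reachability

section RootedTree

variable {V : Type*} {T : Finset (V × V)} {w x y z : V}

theorem isPathFrom_append_singleton {l : List V} (h : IsPathFrom T (l ++ [y]) x z) :
    z = y ∧ (l = [] ∧ x = y ∨ ∃ u, IsPathFrom T l x u ∧ (u, y) ∈ T) := by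
  obtain ⟨-, hnd, hx, hz, hc⟩ := h
  refine ⟨by simpa using hz.symm, ?_⟩
  rcases eq_or_ne l [] with rfl | hne
  · exact Or.inl ⟨rfl, by simpa [eq_comm] using hx⟩
  · refine Or.inr ⟨l.getLast hne, ⟨hne, hnd.sublist (List.sublist_append_left _ _), ?_,
      List.getLast?_eq_some_getLast hne, hc.left_of_append⟩, ?_⟩
    · rwa [List.head?_append_of_ne_nil l hne] at hx
    · exact List.isChain_append.1 hc |>.2.2 _ (List.getLast?_eq_some_getLast hne) _ rfl

theorem IsPathFrom.eq_of_inDegree_le_one (hroot : ∀ f ∈ T, f.2 ≠ w)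
    (hdeg : ∀ f ∈ T, ∀ g ∈ T, f.2 = g.2 → f = g) {l m : List V}
    (hl : IsPathFrom T l w x) (hm : IsPathFrom T m w x) : l = m := by
  induction l using List.reverseRecOn generalizing x m with
  | nil => exact absurd rfl hl.1
  | append_singleton l a ih =>
    obtain ⟨m, b, rfl⟩ := (List.eq_nil_or_concat' m).resolve_left hm.1
    obtain ⟨rfl, hl⟩ := isPathFrom_append_singleton hl
    obtain ⟨hxb, hm⟩ := isPathFrom_append_singleton hm
    subst hxb
    rcases hl with ⟨rfl, rfl⟩ | ⟨u, hu, hua⟩ <;> rcases hm with ⟨rfl, hwx⟩ | ⟨v, hv, hva⟩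
    · rfl
    · exact (hroot _ hva rfl).elim
    · exact (hroot _ hua hwx.symm).elim
    · obtain rfl : u = v := congrArg Prod.fst (hdeg _ hua _ hva rfl)
      rw [ih hu hv]

theorem isRootedTree_of_forall_exists_inEdge [Finite V] (hT : ¬ HasCycle T)
    (hroot : ∀ f ∈ T, f.2 ≠ w) (hdeg : ∀ f ∈ T, ∀ g ∈ T, f.2 = g.2 → f = g)
    (hin : ∀ y, y ≠ w → ∃ f ∈ T, f.2 = y) : IsRootedTree T w := by
  refine ⟨fun y => ?_, hroot, fun f g hf hg => hdeg f hf g hg⟩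
  obtain ⟨l, hl⟩ := reach_of_forall_exists_inEdge hT hin y
  exact ⟨l, hl, fun m hm => hm.eq_of_inDegree_le_one hroot hdeg hl⟩

end RootedTree

theorem Finset.forall_mem_of_weight_induction {α β : Type*} [Preorder β] {s : Finset α}
    (μ : α → β) {p : α → Prop} (h : ∀ e ∈ s, (∀ f ∈ s, μ e < μ f → p f) → p e) :
    ∀ e ∈ s, p e := by
  intro e he
  induction hn : (s.filter fun f => μ e < μ f).card using Nat.strong_induction_on
    generalizing e with
  | _ n ih =>
    refine h e he fun f hf hef => ih _ ?_ f hf rfl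
    refine hn ▸ Finset.card_lt_card ⟨fun g hg => ?_, fun hsub => ?_⟩
    · simp only [Finset.mem_filter] at hg ⊢
      exact ⟨hg.1, hef.trans hg.2⟩
    · exact lt_irrefl _ (Finset.mem_filter.1 (hsub (Finset.mem_filter.2 ⟨hf, hef⟩))).2

section KeepOrInsert

variable {α : Type*} [DecidableEq α] {step : Finset α → α → Finset α}

def KeepsOrInserts (step : Finset α → α → Finset α) : Prop :=
  ∀ D e, step D e = D ∨ step D e = insert e D

namespace KeepsOrInserts

theorem subset_step (h : KeepsOrInserts step) (D : Finset α) (e : α) : D ⊆ step D e := by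
  rcases h D e with h | h <;> rw [h]
  exact Finset.subset_insert e D

theorem mem_step (h : KeepsOrInserts step) {D : Finset α} {e x : α} (hx : x ∈ step D e) :
    x ∈ D ∨ x = e := by
  rcases h D e with h | h <;> rw [h] at hx
  · exact Or.inl hx
  · exact (Finset.mem_insert.1 hx).symm

theorem subset_foldl (h : KeepsOrInserts step) (l : List α) (D : Finset α) :
    D ⊆ l.foldl step D := by
  induction l generalizing D with
  | nil => exact subset_rfl
  | cons e l ih => exact (h.subset_step D e).trans (ih _)

theorem mem_foldl (h : KeepsOrInserts step) {l : List α} {D : Finset α} {x : α}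
    (hx : x ∈ l.foldl step D) : x ∈ D ∨ x ∈ l := by
  induction l generalizing D with
  | nil => exact Or.inl hx
  | cons e l ih =>
    rcases ih hx with hx | hx
    · rcases h.mem_step hx with hx | rfl
      · exact Or.inl hx
      · exact Or.inr List.mem_cons_self
    · exact Or.inr (List.mem_cons_of_mem e hx)

/-- `D` is the diagram built before `e` is processed. -/
theorem exists_stage {V : Type*} [DecidableEq V]
    {step : Finset (V × V) → V × V → Finset (V × V)} (h : KeepsOrInserts step)
    {μ : V × V → ℤ} {ME : Finset (V × V)} {o : List (V × V)} (ho : IsDescOrdering μ ME o)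
    {e : V × V} (he : e ∈ ME) :
    ∃ D, D ⊆ o.foldl step ∅ ∧ e ∉ D ∧ (∀ f ∈ D, μ e ≤ μ f) ∧
      (o.foldl step ∅).filter (fun f => μ e < μ f) ⊆ D ∧
      (e ∈ o.foldl step ∅ ↔ e ∈ step D e) := by
  obtain ⟨p, s, rfl⟩ := List.append_of_mem ((ho.2.1 e).2 he)
  obtain ⟨-, hes, hdisj⟩ := List.nodup_append.1 ho.1
  obtain ⟨-, hsorted, hcross⟩ := List.pairwise_append.1 ho.2.2
  have hep : e ∉ p := fun hp => hdisj e hp e List.mem_cons_self rfl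
  have hfold : (p ++ e :: s).foldl step ∅ = s.foldl step (step (p.foldl step ∅) e) := by
    rw [List.foldl_append, List.foldl_cons]
  have hfromp : ∀ f ∈ p.foldl step ∅, f ∈ p := fun f hf =>
    (h.mem_foldl hf).resolve_left (Finset.notMem_empty f)
  refine ⟨p.foldl step ∅, ?_, fun hmem => hep (hfromp e hmem),
    fun f hf => hcross f (hfromp f hf) e List.mem_cons_self, fun g hg => ?_, ?_⟩
  · rw [hfold]
    exact (h.subset_step _ e).trans (h.subset_foldl s _)
  · rw [Finset.mem_filter, hfold] at hg
    rcases h.mem_foldl hg.1 with hg' | hg'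
    · exact (h.mem_step hg').resolve_right fun hge => lt_irrefl _ (hge ▸ hg.2)
    · exact absurd (List.rel_of_pairwise_cons hsorted hg') (not_le.2 hg.2)
  · rw [hfold]
    exact ⟨fun hmem => (h.mem_foldl hmem).resolve_right (List.nodup_cons.1 hes).1,
      fun hmem => h.subset_foldl s _ hmem⟩

end KeepsOrInserts

end KeepOrInsert

section River

variable {V : Type*} {μ : V × V → ℤ} {ME D H : Finset (V × V)} {o : List (V × V)}
  {e : V × V}

theorem riverStep_keepsOrInserts : KeepsOrInserts (riverStep (V := V)) := fun D e => by
  unfold riverStep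
  split_ifs
  · exact Or.inl rfl
  · exact Or.inr rfl

/-- The edges of `H` of margin at least `μ e` make River reject `e`. -/
def RiverBlocked (μ : V × V → ℤ) (H : Finset (V × V)) (e : V × V) : Prop :=
  (∃ f ∈ H, f.2 = e.2 ∧ μ e ≤ μ f) ∨ Reach (H.filter fun f => μ e ≤ μ f) e.2 e.1

theorem riverStep_eq_self_of_blocked (h : RiverBlocked μ H e)
    (hHD : H.filter (fun f => μ e ≤ μ f) ⊆ D) : riverStep D e = D := by
  refine if_pos ?_
  rcases h with ⟨f, hf, hf2, hle⟩ | hr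
  · exact Or.inl ⟨f, hHD (Finset.mem_filter.2 ⟨hf, hle⟩), hf2⟩
  · exact Or.inr (hr.mono hHD)

theorem riverStep_eq_insert (h₁ : ∀ f ∈ D, f.2 ≠ e.2) (h₂ : ¬ Reach D e.2 e.1) :
    riverStep D e = insert e D :=
  if_neg fun h => h.elim (fun ⟨f, hf, hf2⟩ => h₁ f hf hf2) h₂

theorem mem_of_mem_riverFold {f : V × V} (hf : f ∈ riverFold o) : f ∈ o :=
  (riverStep_keepsOrInserts.mem_foldl hf).resolve_left (Finset.notMem_empty f)

theorem riverFold_inDegree_le_one (o : List (V × V)) :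
    ∀ f ∈ riverFold o, ∀ g ∈ riverFold o, f.2 = g.2 → f = g := by
  refine List.foldlRecOn (motive := fun D => ∀ f ∈ D, ∀ g ∈ D, f.2 = g.2 → f = g)
    o riverStep (b := ∅) (by simp) fun D hD e _ => ?_
  unfold riverStep
  split_ifs with hrej
  · exact hD
  · push Not at hrej
    simp only [Finset.mem_insert]
    rintro f (rfl | hf) g (rfl | hg) hfg
    · rfl
    · exact absurd hfg.symm (hrej.1 g hg)
    · exact absurd hfg (hrej.1 f hf)
    · exact hD f hf g hg hfg

theorem riverFold_acyclic (o : List (V × V)) : ¬ HasCycle (riverFold o) := by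
  refine List.foldlRecOn (motive := fun D => ¬ HasCycle D)
    o riverStep (b := ∅) (by simp [HasCycle]) fun D hD e _ => ?_
  unfold riverStep
  split_ifs with hrej
  · exact hD
  · push Not at hrej
    rintro ⟨f, hf, hreach⟩
    rcases Finset.mem_insert.1 hf with rfl | hf <;>
      rcases hreach.of_insert with h | ⟨h₁, h₂⟩
    · exact hrej.2 h
    · exact hrej.2 h₁
    · exact hD ⟨f, hf, h⟩
    · exact hrej.2 ((h₂.snoc hf).trans h₁)

theorem riverBlocked_of_notMem_riverFold (ho : IsDescOrdering μ ME o) (he : e ∈ ME)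
    (hnot : e ∉ riverFold o) : RiverBlocked μ (riverFold o) e := by
  obtain ⟨D, hDR, -, hge, -, hiff⟩ := riverStep_keepsOrInserts.exists_stage ho he
  have hrej : (∃ f ∈ D, f.2 = e.2) ∨ Reach D e.2 e.1 := by
    by_contra hc
    exact hnot (hiff.2 (by rw [riverStep, if_neg hc]; exact Finset.mem_insert_self e D))
  rcases hrej with ⟨f, hf, hf2⟩ | hr
  · exact Or.inl ⟨f, hDR hf, hf2, hge f hf⟩
  · exact Or.inr (hr.mono fun g hg => Finset.mem_filter.2 ⟨hDR hg, hge g hg⟩)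

theorem not_reach_of_mem_riverFold (ho : IsDescOrdering μ ME o) (he : e ∈ riverFold o) :
    ¬ Reach ((riverFold o).filter fun f => μ e < μ f) e.2 e.1 := by
  obtain ⟨D, -, heD, -, hsub, hiff⟩ :=
    riverStep_keepsOrInserts.exists_stage ho ((ho.2.1 e).1 (mem_of_mem_riverFold he))
  intro hr
  have he' := hiff.1 he
  rw [riverStep, if_pos (Or.inr (hr.mono hsub))] at he'
  exact heD he'

theorem reach_riverFold_of_noIncoming [Finite V] (ho : IsDescOrdering μ ME o)
    (hcomp : ∀ x y, x ≠ y → (x, y) ∈ ME ∨ (y, x) ∈ ME) {w : V}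
    (hw : noIncoming (riverFold o) w) (x : V) : Reach (riverFold o) w x := by
  refine reach_of_forall_exists_inEdge (riverFold_acyclic o) (fun y hy => ?_) x
  by_contra hy'
  push Not at hy'
  -- River would have inserted an edge joining two vertices without incoming edges
  have key : ∀ e ∈ ME, e.1 ≠ e.2 → noIncoming (riverFold o) e.1 →
      noIncoming (riverFold o) e.2 → False := fun e he hne h₁ h₂ => by
    rcases riverBlocked_of_notMem_riverFold ho he (fun he' => h₂ e he' rfl) with
      ⟨f, hf, hf2, -⟩ | hr
    · exact h₂ f hf hf2
    · obtain ⟨f, hf, hf2⟩ := hr.exists_inEdge hne.symm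
      exact h₁ f (Finset.mem_filter.1 hf).1 hf2
  rcases hcomp w y (Ne.symm hy) with h | h
  · exact key _ h (Ne.symm hy) hw hy'
  · exact key _ h hy hy' hw

end River

section RiverOfBlocked

variable {V : Type*} {μ : V × V → ℤ} {ME T : Finset (V × V)} {orsp : List (V × V)}

theorem riverStep_inter_toFinset {q s : List (V × V)} {e : V × V}
    (horsp : IsSetOrdering μ ME T orsp) (hq : orsp = q ++ e :: s) (hTME : T ⊆ ME)
    (hT : ¬ HasCycle T) (hdeg : ∀ f ∈ T, ∀ g ∈ T, f.2 = g.2 → f = g)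
    (hblocked : ∀ e ∈ ME, e ∉ T → RiverBlocked μ T e) :
    riverStep (T ∩ q.toFinset) e = T ∩ (q ++ [e]).toFinset := by
  subst hq
  have heq : e ∉ q := fun h => (List.nodup_append.1 horsp.1).2.2 e h e List.mem_cons_self rfl
  by_cases heT : e ∈ T
  · rw [riverStep_eq_insert (fun f hf hf2 => ?_) fun hr =>
      hT ⟨e, heT, hr.mono Finset.inter_subset_left⟩]
    · ext x
      simp only [Finset.mem_insert, Finset.mem_inter, List.mem_toFinset, List.mem_append,
        List.mem_singleton]
      grind
    · obtain ⟨hfT, hfq⟩ := Finset.mem_inter.1 hf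
      exact heq (hdeg f hfT e heT hf2 ▸ List.mem_toFinset.1 hfq)
  · rw [riverStep_eq_self_of_blocked (hblocked e ((horsp.2.1 e).1 (by simp)) heT)
      (fun f hf => ?_)]
    · ext x
      simp only [Finset.mem_inter, List.mem_toFinset, List.mem_append, List.mem_singleton]
      grind
    · obtain ⟨hfT, hle⟩ := Finset.mem_filter.1 hf
      refine Finset.mem_inter.2 ⟨hfT, List.mem_toFinset.2 ?_⟩
      rcases List.mem_append.1 ((horsp.2.1 f).2 (hTME hfT)) with hfq | hfs
      · exact hfq
      rcases List.mem_cons.1 hfs with rfl | hfs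
      · exact absurd hfT heT
      -- `f` comes after `e`, so it is not stronger, and ties put the edges of `T` first
      obtain ⟨hfe, htie⟩ := List.rel_of_pairwise_cons (List.pairwise_append.1 horsp.2.2).2.1 hfs
      exact absurd (htie (le_antisymm hle hfe) hfT) heT

theorem riverFold_eq_of_blocked (horsp : IsSetOrdering μ ME T orsp) (hTME : T ⊆ ME)
    (hT : ¬ HasCycle T) (hdeg : ∀ f ∈ T, ∀ g ∈ T, f.2 = g.2 → f = g)
    (hblocked : ∀ e ∈ ME, e ∉ T → RiverBlocked μ T e) : riverFold orsp = T := by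
  have hprefix : ∀ q, q <+: orsp → q.foldl riverStep ∅ = T ∩ q.toFinset := by
    intro q
    induction q using List.reverseRecOn with
    | nil => simp
    | append_singleton q e ih =>
      rintro ⟨s, hs⟩
      rw [List.foldl_append, ih ((List.prefix_append q [e]).trans ⟨s, hs⟩), List.foldl_cons,
        List.foldl_nil]
      exact riverStep_inter_toFinset horsp (by rw [← hs, List.append_assoc]; rfl) hTME hT hdeg
        hblocked
  rw [riverFold, hprefix orsp (List.prefix_refl orsp), Finset.inter_eq_left]
  exact fun f hf => List.mem_toFinset.2 ((horsp.2.1 f).2 (hTME hf))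

end RiverOfBlocked

section SemiRiver

variable {V : Type*} {μ : V × V → ℤ} {ME D D' G H : Finset (V × V)} {o : List (V × V)}
  {e f g : V × V}

def SemiRiverR1 (μ : V × V → ℤ) (D : Finset (V × V)) (e : V × V) : Prop :=
  ∃ f ∈ D.filter (fun f => μ e < μ f), f.2 = e.2 ∧
    ¬ Reach (D.filter fun g => μ f ≤ μ g) e.2 f.1

def semiRiverAnc (μ : V × V → ℤ) (D : Finset (V × V)) (e : V × V) : Set V :=
  {v | Reach ((D.filter fun f => μ e < μ f).filter fun g => g.2 ≠ e.2) v e.1}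

noncomputable def semiRiverInduced (μ : V × V → ℤ) (D : Finset (V × V)) (e : V × V) :
    Finset (V × V) :=
  (D.filter fun f => μ e < μ f).filter fun g =>
    g.1 ∈ semiRiverAnc μ D e ∧ g.2 ∈ semiRiverAnc μ D e

def SemiRiverR2 (μ : V × V → ℤ) (D : Finset (V × V)) (e : V × V) : Prop :=
  e.2 ∈ semiRiverAnc μ D e ∧ ¬ HasCycle (semiRiverInduced μ D e) ∧
    ∀ v ∈ semiRiverAnc μ D e, ((∀ g ∈ semiRiverInduced μ D e, g.2 ≠ v) ↔ v = e.2)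

theorem semiRiverStep_keepsOrInserts : KeepsOrInserts (semiRiverStep μ) := fun D e => by
  dsimp only [semiRiverStep]
  split_ifs
  · exact Or.inl rfl
  · exact Or.inr rfl

theorem mem_semiRiverStep_iff (he : e ∉ D) :
    e ∈ semiRiverStep μ D e ↔ ¬ (SemiRiverR1 μ D e ∨ SemiRiverR2 μ D e) := by
  dsimp only [semiRiverStep]
  split_ifs with h
  · exact iff_of_false he (not_not.2 h)
  · exact iff_of_true (Finset.mem_insert_self e D) h

theorem semiRiverR1_congr
    (h : D.filter (fun f => μ e < μ f) = D'.filter (fun f => μ e < μ f)) :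
    SemiRiverR1 μ D e ↔ SemiRiverR1 μ D' e := by
  have hstronger : ∀ {D : Finset (V × V)} {f}, μ e < μ f →
      D.filter (fun g => μ f ≤ μ g) = (D.filter fun g => μ e < μ g).filter fun g => μ f ≤ μ g :=
    fun hf => by
      rw [Finset.filter_filter]
      exact Finset.filter_congr fun g _ => ⟨fun hg => ⟨hf.trans_le hg, hg⟩, And.right⟩
  unfold SemiRiverR1
  rw [h]
  refine exists_congr fun f => and_congr_right fun hf => ?_
  rw [hstronger (Finset.mem_filter.1 hf).2, h, ← hstronger (Finset.mem_filter.1 hf).2]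

theorem semiRiverR2_congr
    (h : D.filter (fun f => μ e < μ f) = D'.filter (fun f => μ e < μ f)) :
    SemiRiverR2 μ D e ↔ SemiRiverR2 μ D' e := by
  unfold SemiRiverR2 semiRiverInduced semiRiverAnc
  rw [h]

theorem mem_of_mem_semiRiverFold (hf : f ∈ semiRiverFold μ o) : f ∈ o :=
  (semiRiverStep_keepsOrInserts.mem_foldl hf).resolve_left (Finset.notMem_empty f)

theorem mem_semiRiverFold_iff (ho : IsDescOrdering μ ME o) (he : e ∈ ME) :
    e ∈ semiRiverFold μ o ↔
      ¬ (SemiRiverR1 μ (semiRiverFold μ o) e ∨ SemiRiverR2 μ (semiRiverFold μ o) e) := by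
  obtain ⟨D, hDG, heD, -, hsub, hiff⟩ := semiRiverStep_keepsOrInserts.exists_stage ho he
  have hfilter : D.filter (fun f => μ e < μ f) =
      (semiRiverFold μ o).filter (fun f => μ e < μ f) :=
    (Finset.filter_subset_filter _ hDG).antisymm fun g hg =>
      Finset.mem_filter.2 ⟨hsub hg, (Finset.mem_filter.1 hg).2⟩
  rw [semiRiverFold, hiff, mem_semiRiverStep_iff heD, semiRiverR1_congr hfilter,
    semiRiverR2_congr hfilter, semiRiverFold]

/-- What (sR1) guarantees in the final diagram. -/
theorem reach_of_mem_semiRiverFold_of_lt (ho : IsDescOrdering μ ME o)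
    (hf : f ∈ semiRiverFold μ o) (hg : g ∈ semiRiverFold μ o) (h2 : g.2 = f.2)
    (hlt : μ f < μ g) : Reach ((semiRiverFold μ o).filter fun x => μ g ≤ μ x) g.2 g.1 := by
  have hR1 := (not_or.1 ((mem_semiRiverFold_iff ho
    ((ho.2.1 f).1 (mem_of_mem_semiRiverFold hf))).1 hf)).1
  by_contra hr
  exact hR1 ⟨g, Finset.mem_filter.2 ⟨hg, hlt⟩, h2, h2 ▸ hr⟩

/-! In the next lemmas `G` is a semi-River diagram and `H` is a River diagram or a Prim tree
on `G`. -/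

theorem not_semiRiverR1 (hHG : ∀ x ∈ H, μ e < μ x → x ∈ G)
    (hHe : ∀ x ∈ H, μ e < μ x → x.2 ≠ e.2)
    (hblocked : ∀ g ∈ G, μ e < μ g → g ∉ H → RiverBlocked μ H g) :
    ¬ SemiRiverR1 μ G e := by
  rintro ⟨h, hh, hh2, hnr⟩
  rw [Finset.mem_filter] at hh
  rcases hblocked h hh.1 hh.2 (fun hH => hHe h hH hh.2 hh2) with ⟨x, hx, hx2, hle⟩ | hr
  · exact hHe x hx (hh.2.trans_le hle) (hx2.trans hh2)
  · refine hnr (hh2 ▸ hr.mono fun x hx => ?_)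
    rw [Finset.mem_filter] at hx ⊢
    exact ⟨hHG x hx.1 (hh.2.trans_le hx.2), hx.2⟩

theorem reach_semiRiverInduced (hHG : ∀ x ∈ H, μ e < μ x → x ∈ G)
    (hHe : ∀ x ∈ H, μ e < μ x → x.2 ≠ e.2) (hg : g ∈ semiRiverInduced μ G e) {u : V}
    (hr : Reach (H.filter fun x => μ g ≤ μ x) u g.1) : Reach (semiRiverInduced μ G e) u g.1 := by
  obtain ⟨hgG, hg1, -⟩ := Finset.mem_filter.1 hg
  have hlt := (Finset.mem_filter.1 hgG).2
  have hsub : H.filter (fun x => μ g ≤ μ x) ⊆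
      (G.filter fun f => μ e < μ f).filter fun x => x.2 ≠ e.2 := fun x hx => by
    obtain ⟨hxH, hle⟩ := Finset.mem_filter.1 hx
    exact Finset.mem_filter.2 ⟨Finset.mem_filter.2 ⟨hHG x hxH (hlt.trans_le hle),
      hlt.trans_le hle⟩, hHe x hxH (hlt.trans_le hle)⟩
  refine hr.mono_of_reach fun a b hab hb => ?_
  have hbAnc : b ∈ semiRiverAnc μ G e := (hb.mono hsub).trans hg1
  have haAnc : a ∈ semiRiverAnc μ G e := (Reach.single (hsub hab)).trans hbAnc
  exact Finset.mem_filter.2 ⟨(Finset.mem_filter.1 (hsub hab)).1, haAnc, hbAnc⟩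

/-- Climbing back from `e.1` along strong edges of `H` inside the ancestor set of (sR2) must
reach `e.2`: the only other way to stop is at a source of the induced subgraph, whose incoming
edge `g` is then blocked in `H` by a path that closes a cycle with `g`. -/
theorem reach_of_semiRiverR2 [Finite V] (hH : ¬ HasCycle H)
    (hHG : ∀ x ∈ H, μ e < μ x → x ∈ G) (hHe : ∀ x ∈ H, μ e < μ x → x.2 ≠ e.2)
    (hblocked : ∀ g ∈ G, μ e < μ g → g ∉ H → RiverBlocked μ H g)
    (hR2 : SemiRiverR2 μ G e) : Reach (H.filter fun x => μ e < μ x) e.2 e.1 := by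
  obtain ⟨-, hacyc, hsrc⟩ := hR2
  suffices ∀ u ∈ semiRiverAnc μ G e, Reach (H.filter fun x => μ e < μ x) u e.1 →
      Reach (H.filter fun x => μ e < μ x) e.2 e.1 from
    this e.1 (Reach.refl _ _) (Reach.refl _ _)
  intro u
  induction u using (wellFounded_of_not_hasCycle hH).induction with
  | _ u ih =>
    intro hu hru
    by_cases hue : u = e.2
    · exact hue ▸ hru
    by_cases hin : ∃ x ∈ H, x.2 = u ∧ μ e < μ x
    · obtain ⟨⟨a, b⟩, hx, rfl, hlt⟩ := hin
      refine ih a hx ((Reach.single ?_).trans hu) ((Reach.single ?_).trans hru)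
      · exact Finset.mem_filter.2 ⟨Finset.mem_filter.2 ⟨hHG _ hx hlt, hlt⟩, hue⟩
      · exact Finset.mem_filter.2 ⟨hx, hlt⟩
    push Not at hin
    obtain ⟨g, hg, rfl⟩ : ∃ g ∈ semiRiverInduced μ G e, g.2 = u := by
      by_contra h
      push Not at h
      exact hue ((hsrc u hu).1 h)
    obtain ⟨hgG, hlt⟩ := Finset.mem_filter.1 (Finset.mem_filter.1 hg).1
    rcases hblocked g hgG hlt (fun hgH => (hin g hgH rfl).not_gt hlt) with
      ⟨x, hx, hx2, hle⟩ | hr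
    · exact absurd (hin x hx hx2) (not_le.2 (hlt.trans_le hle))
    · exact (hacyc ⟨g, hg, reach_semiRiverInduced hHG hHe hg hr⟩).elim

theorem reach_of_semiRiverRejects [Finite V] (hH : ¬ HasCycle H)
    (hHG : ∀ x ∈ H, μ e < μ x → x ∈ G) (hHe : ∀ x ∈ H, μ e < μ x → x.2 ≠ e.2)
    (hblocked : ∀ g ∈ G, μ e < μ g → g ∉ H → RiverBlocked μ H g)
    (hrej : SemiRiverR1 μ G e ∨ SemiRiverR2 μ G e) :
    Reach (H.filter fun x => μ e < μ x) e.2 e.1 :=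
  hrej.elim (fun h => (not_semiRiverR1 hHG hHe hblocked h).elim)
    (reach_of_semiRiverR2 hH hHG hHe hblocked)

theorem riverFold_subset_semiRiverFold [Finite V] {o' : List (V × V)}
    (ho : IsDescOrdering μ ME o) (ho' : IsDescOrdering μ ME o') :
    riverFold o' ⊆ semiRiverFold μ o := by
  intro f hf
  refine Finset.forall_mem_of_weight_induction μ (p := (· ∈ semiRiverFold μ o))
    (fun f hf ih => ?_) f hf
  have hfME := (ho'.2.1 f).1 (mem_of_mem_riverFold hf)
  by_contra hfG
  refine not_reach_of_mem_riverFold ho' hf (reach_of_semiRiverRejects (riverFold_acyclic o') ih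
    (fun x hx hlt h2 => ?_) (fun g hg _ hgR => ?_) ?_)
  · rw [riverFold_inDegree_le_one o' x hx f hf h2] at hlt
    exact lt_irrefl _ hlt
  · exact riverBlocked_of_notMem_riverFold ho' ((ho.2.1 g).1 (mem_of_mem_semiRiverFold hg)) hgR
  · by_contra h
    exact hfG ((mem_semiRiverFold_iff ho hfME).2 h)

end SemiRiver

section Prim

variable {V β : Type*} [LinearOrder β] {E : Finset (V × V)} {μ : V × V → β} {w : V}
  {S : Finset V} {T : Finset (V × V)} {r : V → ℕ} {f : V × V}

/-- `r` numbers the vertices of `S` in the order in which a run of the directed Prim algorithm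
explored them. The greedy choice is `le_of_rank`: the edge of `T` entering `f.2` is at least as
heavy as every edge that was crossing when `f.2` was explored. -/
structure IsPrimRanking (E : Finset (V × V)) (μ : V × V → β) (w : V) (S : Finset V)
    (T : Finset (V × V)) (r : V → ℕ) : Prop where
  root_mem : w ∈ S
  rank_root : r w = 0
  injOn : Set.InjOn r S
  subset : T ⊆ E
  fst_mem : ∀ f ∈ T, f.1 ∈ S
  snd_mem : ∀ f ∈ T, f.2 ∈ S
  rank_lt : ∀ f ∈ T, r f.1 < r f.2
  inDegree : ∀ f ∈ T, ∀ g ∈ T, f.2 = g.2 → f = g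
  exists_inEdge : ∀ x ∈ S, x ≠ w → ∃ f ∈ T, f.2 = x
  le_of_rank : ∀ f ∈ T, ∀ g ∈ E, g.1 ∈ S → r g.1 < r f.2 → (g.2 ∈ S → r f.2 ≤ r g.2) →
    μ g ≤ μ f

namespace IsPrimRanking

variable {e : V × V}

theorem le_of_rank_insert (hr : IsPrimRanking E μ w S T r)
    (hmax : ∀ f ∈ E, f.1 ∈ S → f.2 ∉ S → μ f ≤ μ e) {r' : V → ℕ} {k : ℕ}
    (hold : ∀ x ∈ S, r' x = r x) (hnew : r' e.2 = k) (hlt : ∀ x ∈ S, r x < k) :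
    ∀ f ∈ insert e T, ∀ g ∈ E, g.1 ∈ insert e.2 S → r' g.1 < r' f.2 →
      (g.2 ∈ insert e.2 S → r' f.2 ≤ r' g.2) → μ g ≤ μ f := by
  intro f hf g hg hg1 hlt1 hle2
  have hfe : r' f.2 ≤ k := by
    rcases Finset.mem_insert.1 hf with rfl | hf
    · exact hnew.le
    · rw [hold _ (hr.snd_mem f hf)]
      exact (hlt _ (hr.snd_mem f hf)).le
  have hg1S : g.1 ∈ S := by
    refine (Finset.mem_insert.1 hg1).resolve_left fun h => ?_
    rw [h, hnew] at hlt1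
    exact absurd hlt1 (not_lt.2 hfe)
  rw [hold _ hg1S] at hlt1
  rcases Finset.mem_insert.1 hf with rfl | hf
  · refine hmax g hg hg1S fun hg2 => ?_
    have := hle2 (Finset.mem_insert_of_mem hg2)
    rw [hnew, hold _ hg2] at this
    exact absurd (hlt _ hg2) (not_lt.2 this)
  · rw [hold _ (hr.snd_mem f hf)] at hlt1 hle2
    refine hr.le_of_rank f hf g hg hg1S hlt1 fun hg2 => ?_
    simpa [hold _ hg2] using hle2 (Finset.mem_insert_of_mem hg2)

theorem insert (hr : IsPrimRanking E μ w S T r) (he : e ∈ E) (h1 : e.1 ∈ S) (h2 : e.2 ∉ S)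
    (hmax : ∀ f ∈ E, f.1 ∈ S → f.2 ∉ S → μ f ≤ μ e) {r' : V → ℕ} {k : ℕ}
    (hold : ∀ x ∈ S, r' x = r x) (hnew : r' e.2 = k) (hlt : ∀ x ∈ S, r x < k) :
    IsPrimRanking E μ w (insert e.2 S) (insert e T) r' := by
  refine ⟨Finset.mem_insert_of_mem hr.root_mem, by rw [hold w hr.root_mem, hr.rank_root], ?_,
    Finset.insert_subset he hr.subset, ?_, ?_, ?_, ?_, ?_,
    hr.le_of_rank_insert hmax hold hnew hlt⟩
  · rw [Finset.coe_insert, Set.injOn_insert (fun h => h2 (Finset.mem_coe.1 h)), hnew]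
    refine ⟨fun x hx y hy hxy => hr.injOn hx hy ?_, fun ⟨x, hx, hxe⟩ => ?_⟩
    · rwa [hold x hx, hold y hy] at hxy
    · exact (hlt x hx).ne (by rw [← hold x hx, hxe])
  · intro f hf
    rcases Finset.mem_insert.1 hf with rfl | hf
    · exact Finset.mem_insert_of_mem h1
    · exact Finset.mem_insert_of_mem (hr.fst_mem f hf)
  · intro f hf
    rcases Finset.mem_insert.1 hf with rfl | hf
    · exact Finset.mem_insert_self _ S
    · exact Finset.mem_insert_of_mem (hr.snd_mem f hf)
  · intro f hf
    rcases Finset.mem_insert.1 hf with rfl | hf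
    · rw [hold _ h1, hnew]
      exact hlt _ h1
    · rw [hold _ (hr.fst_mem f hf), hold _ (hr.snd_mem f hf)]
      exact hr.rank_lt f hf
  · intro f hf g hg hfg
    rcases Finset.mem_insert.1 hf with rfl | hf' <;>
      rcases Finset.mem_insert.1 hg with rfl | hg'
    · rfl
    · exact absurd (hfg ▸ hr.snd_mem g hg') h2
    · exact absurd (hfg.symm ▸ hr.snd_mem f hf') h2
    · exact hr.inDegree f hf' g hg' hfg
  · intro x hx hxw
    rcases Finset.mem_insert.1 hx with rfl | hx
    · exact ⟨e, Finset.mem_insert_self e T, rfl⟩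
    · obtain ⟨f, hf, hfx⟩ := hr.exists_inEdge x hx hxw
      exact ⟨f, Finset.mem_insert_of_mem hf, hfx⟩

end IsPrimRanking

theorem PrimRun.exists_isPrimRanking (h : PrimRun E μ w S T) :
    ∃ r, IsPrimRanking E μ w S T r := by
  induction h with
  | init =>
    refine ⟨fun _ => 0, ⟨Finset.mem_singleton_self w, rfl, ?_, Finset.empty_subset E, ?_, ?_,
      ?_, ?_, ?_, ?_⟩⟩ <;> simp [Set.InjOn]
  | @step S T e he h1 h2 hmax _ ih =>
    obtain ⟨r, hr⟩ := ih
    exact ⟨Function.update r e.2 (S.sup r + 1), hr.insert he h1 h2 hmax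
      (fun x hx => Function.update_of_ne (by rintro rfl; exact h2 hx) _ _)
      (Function.update_self ..) fun x hx => Nat.lt_succ_of_le (Finset.le_sup hx)⟩

namespace IsPrimRanking

theorem snd_ne_root (hP : IsPrimRanking E μ w S T r) (hf : f ∈ T) : f.2 ≠ w := fun h => by
  have := hP.rank_lt f hf
  rw [h, hP.rank_root] at this
  exact Nat.not_lt_zero _ this

theorem not_hasCycle (hP : IsPrimRanking E μ w S T r) : ¬ HasCycle T :=
  not_hasCycle_of_rank hP.rank_lt

variable [Fintype V] {g : V × V} {a b x : V}

theorem injective (hP : IsPrimRanking E μ w Finset.univ T r) : Function.Injective r :=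
  fun x y h => hP.injOn (Finset.mem_coe.2 (Finset.mem_univ x))
    (Finset.mem_coe.2 (Finset.mem_univ y)) h

theorem ne_root_of_rank_pos (hP : IsPrimRanking E μ w Finset.univ T r) (hx : 0 < r x) :
    x ≠ w := by
  rintro rfl
  rw [hP.rank_root] at hx
  exact lt_irrefl 0 hx

theorem isRootedTree (hP : IsPrimRanking E μ w Finset.univ T r) : IsRootedTree T w :=
  isRootedTree_of_forall_exists_inEdge hP.not_hasCycle (fun _ => hP.snd_ne_root)
    hP.inDegree fun y => hP.exists_inEdge y (Finset.mem_univ y)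

theorem le_of_rank_lt_of_rank_le (hP : IsPrimRanking E μ w Finset.univ T r) (hf : f ∈ T)
    (hg : g ∈ E) (h₁ : r g.1 < r f.2) (h₂ : r f.2 ≤ r g.2) : μ g ≤ μ f :=
  hP.le_of_rank f hf g hg (Finset.mem_univ _) h₁ fun _ => h₂

theorem le_of_reach (hP : IsPrimRanking E μ w Finset.univ T r) {c : β} {F : Finset (V × V)}
    (hF : ∀ g ∈ F, g ∈ E ∧ c ≤ μ g) (hab : Reach F a b) (hf : f ∈ T) (ha : r a < r f.2)
    (hb : r f.2 ≤ r b) : c ≤ μ f := by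
  obtain ⟨g, hg, h₁, h₂⟩ := hab.exists_crossing (fun x => r x < r f.2) ha (not_lt.2 hb)
  exact (hF g hg).2.trans (hP.le_of_rank_lt_of_rank_le hf (hF g hg).1 h₁ (not_lt.1 h₂))

theorem reach_of_forall_rank_between (hP : IsPrimRanking E μ w Finset.univ T r) {c : β}
    {F : Finset (V × V)} (hF : ∀ f ∈ T, c ≤ μ f → f ∈ F) (hab : r a ≤ r b)
    (h : ∀ f ∈ T, r a < r f.2 → r f.2 ≤ r b → c ≤ μ f ∧ r a ≤ r f.1) : Reach F a b := by
  induction hn : r b using Nat.strong_induction_on generalizing b with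
  | _ n ih =>
    by_cases hba : b = a
    · subst hba
      exact Reach.refl _ b
    have hlt : r a < r b := hab.lt_of_ne fun h => hba (hP.injective h.symm)
    obtain ⟨f, hf, rfl⟩ := hP.exists_inEdge b (Finset.mem_univ b)
      (hP.ne_root_of_rank_pos (Nat.zero_lt_of_lt hlt))
    obtain ⟨hc, ha⟩ := h f hf hlt le_rfl
    have hrf := hP.rank_lt f hf
    exact (ih (r f.1) (hn ▸ hrf) ha (fun g hg h₁ h₂ => h g hg h₁ (h₂.trans hrf.le)) rfl).snoc
      (hF f hf hc)

end IsPrimRanking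

end Prim

section PrimOnSemiRiver

variable {V : Type*} [Fintype V] {μ : V × V → ℤ} {ME T : Finset (V × V)} {o : List (V × V)}
  {o' : List (V × V)} {w : V} {r : V → ℕ} {e g : V × V}

theorem reach_of_snd_eq_of_noIncoming (ho : IsDescOrdering μ ME o)
    (ho' : IsDescOrdering μ ME o') (hw : noIncoming (riverFold o') w)
    (hg : g ∈ semiRiverFold μ o) (hgw : g.2 = w) :
    Reach ((semiRiverFold μ o).filter fun x => μ g ≤ μ x) g.2 g.1 := by
  rcases riverBlocked_of_notMem_riverFold ho' ((ho.2.1 g).1 (mem_of_mem_semiRiverFold hg))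
    (fun h => hw g h hgw) with ⟨f, hf, hf2, -⟩ | hr
  · exact (hw f hf (hf2.trans hgw)).elim
  · exact hr.mono (Finset.filter_subset_filter _ (riverFold_subset_semiRiverFold ho ho'))

theorem reach_primTree_of_lt (ho : IsDescOrdering μ ME o)
    (ho' : IsDescOrdering μ ME o') (hw : noIncoming (riverFold o') w)
    (hloop : ∀ e ∈ ME, e.1 ≠ e.2) (hP : IsPrimRanking (semiRiverFold μ o) μ w Finset.univ T r)
    (hg : g ∈ semiRiverFold μ o) (hweak : ∀ f ∈ T, f.2 = g.2 → μ f < μ g) :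
    Reach (T.filter fun f => μ g ≤ μ f) g.2 g.1 := by
  -- Prim preferred the tree edge entering `g.2` to every edge crossing at that time
  have hbefore : ∀ x ∈ semiRiverFold μ o, r x.1 < r g.2 → r g.2 ≤ r x.2 → μ x < μ g := by
    intro x hx h₁ h₂
    obtain ⟨f, hf, hf2⟩ := hP.exists_inEdge g.2 (Finset.mem_univ _)
      (hP.ne_root_of_rank_pos (Nat.zero_lt_of_lt h₁))
    exact (hP.le_of_rank_lt_of_rank_le hf hx (hf2 ▸ h₁) (hf2 ▸ h₂)).trans_lt (hweak f hf hf2)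
  have hstar : Reach ((semiRiverFold μ o).filter fun x => μ g ≤ μ x) g.2 g.1 := by
    by_cases hgw : g.2 = w
    · exact reach_of_snd_eq_of_noIncoming ho ho' hw hg hgw
    · obtain ⟨f, hf, hf2⟩ := hP.exists_inEdge g.2 (Finset.mem_univ _) hgw
      exact reach_of_mem_semiRiverFold_of_lt ho (hP.subset hf) hg hf2.symm (hweak f hf hf2)
  have hlt : r g.2 < r g.1 := by
    refine lt_of_le_of_ne (not_lt.1 fun h => lt_irrefl _ (hbefore g hg h le_rfl)) fun h => ?_
    exact hloop g ((ho.2.1 g).1 (mem_of_mem_semiRiverFold hg)) (hP.injective h).symm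
  have hstrong : ∀ f ∈ T, r g.2 < r f.2 → r f.2 ≤ r g.1 → μ g ≤ μ f :=
    fun f hf => hP.le_of_reach (fun x hx => Finset.mem_filter.1 hx) hstar hf
  refine hP.reach_of_forall_rank_between (fun f hf hle => Finset.mem_filter.2 ⟨hf, hle⟩) hlt.le
    fun f hf h₁ h₂ => ⟨hstrong f hf h₁ h₂, not_lt.1 fun h => ?_⟩
  exact (hbefore f (hP.subset hf) h h₁.le).not_ge (hstrong f hf h₁ h₂)

theorem riverBlocked_primTree_of_mem_semiRiverFold (ho : IsDescOrdering μ ME o)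
    (ho' : IsDescOrdering μ ME o') (hw : noIncoming (riverFold o') w)
    (hloop : ∀ e ∈ ME, e.1 ≠ e.2) (hP : IsPrimRanking (semiRiverFold μ o) μ w Finset.univ T r)
    (hg : g ∈ semiRiverFold μ o) : RiverBlocked μ T g := by
  by_cases hstrong : ∃ f ∈ T, f.2 = g.2 ∧ μ g ≤ μ f
  · exact Or.inl hstrong
  push Not at hstrong
  exact Or.inr (reach_primTree_of_lt ho ho' hw hloop hP hg hstrong)

theorem riverBlocked_primTree (ho : IsDescOrdering μ ME o)
    (ho' : IsDescOrdering μ ME o') (hw : noIncoming (riverFold o') w)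
    (hloop : ∀ e ∈ ME, e.1 ≠ e.2) (hP : IsPrimRanking (semiRiverFold μ o) μ w Finset.univ T r)
    (he : e ∈ ME) : RiverBlocked μ T e := by
  by_cases heG : e ∈ semiRiverFold μ o
  · exact riverBlocked_primTree_of_mem_semiRiverFold ho ho' hw hloop hP heG
  by_cases hstrong : ∃ f ∈ T, f.2 = e.2 ∧ μ e ≤ μ f
  · exact Or.inl hstrong
  push Not at hstrong
  refine Or.inr ((reach_of_semiRiverRejects hP.not_hasCycle (fun x hx _ => hP.subset hx)
    (fun x hx hlt h2 => (hstrong x hx h2).not_gt hlt)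
    (fun g hg _ _ => riverBlocked_primTree_of_mem_semiRiverFold ho ho' hw hloop hP hg)
    ?_).mono fun x hx =>
      Finset.mem_filter.2 ⟨(Finset.mem_filter.1 hx).1, (Finset.mem_filter.1 hx).2.le⟩)
  by_contra h
  exact heG ((mem_semiRiverFold_iff ho he).2 h)

end PrimOnSemiRiver

section Profile

variable {A : Type*} [Fintype A] {m : ℕ}

theorem margin_swap (P : Profile A m) (x y : A) : margin P y x = -margin P x y := by
  unfold margin
  ring

theorem ne_of_mem_marginEdges (P : Profile A m) : ∀ e ∈ marginEdges P, e.1 ≠ e.2 :=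
  fun _ he => (Finset.mem_filter.1 he).2.1

theorem mem_marginEdges_or_swap (P : Profile A m) :
    ∀ x y, x ≠ y → (x, y) ∈ marginEdges P ∨ (y, x) ∈ marginEdges P := by
  intro x y hxy
  simp only [marginEdges, Finset.mem_filter, Finset.mem_univ, true_and, margin_swap P x y]
  rcases le_total 0 (margin P x y) with h | h
  · exact Or.inl ⟨hxy, h⟩
  · exact Or.inr ⟨hxy.symm, neg_nonneg.2 h⟩

end Profile

theorem put_winner_rspt_equals_river_diagram_general
    {A : Type*} [Fintype A] {m : ℕ}
    (P : Profile A m) (w : A)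
    (hput : ∃ o : List (A × A), IsDescOrdering (marginE P) (marginEdges P) o ∧
      noIncoming (riverFold o) w)
    (o : List (A × A)) (ho : IsDescOrdering (marginE P) (marginEdges P) o)
    (T : Finset (A × A))
    (hT : IsPrimOutput (semiRiverFold (marginE P) o) (marginE P) w T)
    (orsp : List (A × A))
    (horsp : IsSetOrdering (marginE P) (marginEdges P) T orsp) :
    T = riverFold orsp ∧ IsRootedTree (riverFold orsp) w ∧
      noIncoming (riverFold orsp) w := by
  obtain ⟨o', ho', hw⟩ := hput
  obtain ⟨S, hrun, hclosed⟩ := hT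
  obtain ⟨r, hP⟩ := hrun.exists_isPrimRanking
  -- `w` reaches every vertex in its River diagram, which lies inside the semi-River diagram
  obtain rfl : S = Finset.univ := Finset.eq_univ_of_forall fun x => by
    by_contra hx
    obtain ⟨f, hf, h₁, h₂⟩ := ((reach_riverFold_of_noIncoming ho' (mem_marginEdges_or_swap P)
      hw x).mono (riverFold_subset_semiRiverFold ho ho')).exists_crossing (· ∈ S) hP.root_mem hx
    exact h₂ (hclosed f hf h₁)
  have hfold : riverFold orsp = T :=
    riverFold_eq_of_blocked horsp
      (fun f hf => (ho.2.1 f).1 (mem_of_mem_semiRiverFold (hP.subset hf))) hP.not_hasCycle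
      hP.inDegree fun e he _ => riverBlocked_primTree ho ho' hw (ne_of_mem_marginEdges P) hP he
  rw [hfold]
  exact ⟨rfl, hP.isRootedTree, fun _ => hP.snd_ne_root⟩

/-- Let `w` be a River PUT winner of `P`. Let `T` be an output of the
directed Prim algorithm started at `w` on the semi-River diagram `sRV(P)` (weighted by
the margins, and computed with any descending linear ordering `o`), and let `orsp` be
any descending linear ordering of the margin-graph edges in which, among edges of equal
margin, edges of `T` come first. Then `T = M^RV(orsp, P)`; in particular `w` is the root
of `M^RV(orsp, P)` and hence `w ∈ RV(orsp, P)`. -/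
theorem put_winner_rspt_equals_river_diagram
    {A : Type*} [Fintype A] {m : ℕ} (hm : 1 ≤ m) (hA : 2 ≤ Fintype.card A)
    (P : Profile A m) (w : A)
    (hput : ∃ o : List (A × A), IsDescOrdering (marginE P) (marginEdges P) o ∧
      noIncoming (riverFold o) w)
    (o : List (A × A)) (ho : IsDescOrdering (marginE P) (marginEdges P) o)
    (T : Finset (A × A))
    (hT : IsPrimOutput (semiRiverFold (marginE P) o) (marginE P) w T)
    (orsp : List (A × A))
    (horsp : IsSetOrdering (marginE P) (marginEdges P) T orsp) :
    T = riverFold orsp ∧ IsRootedTree (riverFold orsp) w ∧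
      noIncoming (riverFold orsp) w :=
  put_winner_rspt_equals_river_diagram_general P w hput o ho T hT orsp horsp
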